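/- Let α₀ ∈ ℂ and define on ℂ⁴ (coordinates (q₁, p₁, q₂, p₂)) the polynomials K₁ = q₁² p₁ + 3α₀ q₁ − q₂²/2 − p₂³/6 + p₁ p₂ and K₂ = p₁³/9 − (3α₀/2) q₂ p₂² + 3α₀² p₂ + α₀ p₁ q₂ + 3α₀ q₁ q₂² − (1/3) p₁² p₂² + (2/3) q₁ p₁² q₂ + (1/4) p₁ p₂⁴ + q₁² p₁ q₂² − q₁ p₁ q₂ p₂². Let V = (∂K₁/∂p₁, −∂K₁/∂q₁, ∂K₁/∂p₂, −∂K₁/∂q₂) and W = (∂K₂/∂p₁, −∂K₂/∂q₁, ∂K₂/∂p₂, −∂K₂/∂q₂) be the corresponding Hamiltonian vector fields. Then V and W commute: for every a ∈ ℂ⁴, (DW)(a)·V(a) − (DV)(a)·W(a) = 0, where DV, DW denote the Jacobian matrices. Consequently the pair of Hamiltonian flows (A1) generated by K₁ (in t) and K₂ (in s) is compatible. -/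

import Mathlib

/-- The Hamiltonian `K₁` of the autonomous system (A1), on coordinates
`(q₁,p₁,q₂,p₂) = (a 0, a 1, a 2, a 3)`. -/
noncomputable def K1 (a0 : ℂ) (a : Fin 4 → ℂ) : ℂ :=
  (a 0) ^ 2 * a 1 + 3 * a0 * a 0 - (a 2) ^ 2 / 2 - (a 3) ^ 3 / 6 + a 1 * a 3

/-- The Hamiltonian `K₂` of the autonomous system (A1). -/
noncomputable def K2 (a0 : ℂ) (a : Fin 4 → ℂ) : ℂ :=
  (a 1) ^ 3 / 9 - (3 * a0 / 2) * a 2 * (a 3) ^ 2 + 3 * a0 ^ 2 * a 3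
    + a0 * a 1 * a 2 + 3 * a0 * a 0 * (a 2) ^ 2 - (1/3) * (a 1) ^ 2 * (a 3) ^ 2
    + (2/3) * a 0 * (a 1) ^ 2 * a 2 + (1/4) * a 1 * (a 3) ^ 4
    + (a 0) ^ 2 * a 1 * (a 2) ^ 2 - a 0 * a 1 * a 2 * (a 3) ^ 2

/-- Partial derivative of a function on `ℂ⁴` in the `j`-th coordinate. -/
noncomputable def pd (K : (Fin 4 → ℂ) → ℂ) (j : Fin 4) (a : Fin 4 → ℂ) : ℂ :=
  deriv (fun s => K (Function.update a j s)) (a j)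

/-- The Hamiltonian vector field of `K₁`:
`(∂K₁/∂p₁, -∂K₁/∂q₁, ∂K₁/∂p₂, -∂K₁/∂q₂)`. -/
noncomputable def V (a0 : ℂ) (a : Fin 4 → ℂ) : Fin 4 → ℂ :=
  ![pd (K1 a0) 1 a, -pd (K1 a0) 0 a, pd (K1 a0) 3 a, -pd (K1 a0) 2 a]

/-- The Hamiltonian vector field of `K₂`. -/
noncomputable def W (a0 : ℂ) (a : Fin 4 → ℂ) : Fin 4 → ℂ :=
  ![pd (K2 a0) 1 a, -pd (K2 a0) 0 a, pd (K2 a0) 3 a, -pd (K2 a0) 2 a]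

/-!
Both Hamiltonian vector fields are explicit polynomial maps. Once they are computed, every
component of the bracket `(DW)·V - (DV)·W` is a polynomial identity in `q₁, p₁, q₂, p₂, α₀`.
-/

lemma V_eq (a0 : ℂ) (b : Fin 4 → ℂ) :
    V a0 b = ![b 0 ^ 2 + b 3, -(2 * b 0 * b 1 + 3 * a0), b 1 - b 3 ^ 2 / 2, b 2] := by
  ext i
  fin_cases i <;>
    simp (disch := fun_prop) only [V, pd, K1, Function.update, ↓reduceDIte, Fin.reduceEq,
      deriv_fun_add, deriv_fun_sub, deriv_fun_mul, deriv_const_mul_id', deriv_const',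
      deriv_div_const, deriv_fun_pow, deriv_id'', Fin.zero_eta, Fin.mk_one, Fin.reduceFinMk,
      Matrix.cons_val] <;>
    ring

lemma W_eq (a0 : ℂ) (b : Fin 4 → ℂ) :
    W a0 b = ![b 1 ^ 2 / 3 + a0 * b 2 - 2 / 3 * b 1 * b 3 ^ 2 + 4 / 3 * b 0 * b 1 * b 2
          + b 3 ^ 4 / 4 + b 0 ^ 2 * b 2 ^ 2 - b 0 * b 2 * b 3 ^ 2,
        -(3 * a0 * b 2 ^ 2 + 2 / 3 * b 1 ^ 2 * b 2 + 2 * b 0 * b 1 * b 2 ^ 2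
          - b 1 * b 2 * b 3 ^ 2),
        -3 * a0 * b 2 * b 3 + 3 * a0 ^ 2 - 2 / 3 * b 1 ^ 2 * b 3 + b 1 * b 3 ^ 3
          - 2 * b 0 * b 1 * b 2 * b 3,
        3 * a0 / 2 * b 3 ^ 2 - a0 * b 1 - 6 * a0 * b 0 * b 2 - 2 / 3 * b 0 * b 1 ^ 2
          - 2 * b 0 ^ 2 * b 1 * b 2 + b 0 * b 1 * b 3 ^ 2] := by
  ext i
  fin_cases i <;>
    simp (disch := fun_prop) only [W, pd, K2, Function.update, ↓reduceDIte, Fin.reduceEq,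
      deriv_fun_add, deriv_fun_sub, deriv_fun_mul, deriv_const_mul_id', deriv_const',
      deriv_div_const, deriv_fun_pow, deriv_id'', Fin.zero_eta, Fin.mk_one, Fin.reduceFinMk,
      Matrix.cons_val] <;>
    ring

/-- The Hamiltonian vector fields `V` of `K₁` and `W` of `K₂`
commute: `(DW)(a)·V(a) - (DV)(a)·W(a) = 0` at every point `a ∈ ℂ⁴`, so the two
Hamiltonian flows of the autonomous system (A1) are compatible. -/
theorem stmt13 (a0 : ℂ) :
    ∀ a : Fin 4 → ℂ, ∀ i : Fin 4,
      fderiv ℂ (fun b => W a0 b i) a (V a0 a)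
        - fderiv ℂ (fun b => V a0 b i) a (W a0 a) = 0 := by
  intro a i
  simp only [V_eq, W_eq]
  fin_cases i <;>
  · simp only [Fin.zero_eta, Fin.mk_one, Fin.reduceFinMk, Matrix.cons_val]
    rw [← DifferentiableAt.lineDeriv_eq_fderiv (by fun_prop),
      ← DifferentiableAt.lineDeriv_eq_fderiv (by fun_prop)]
    simp (disch := fun_prop) only [lineDeriv, Pi.add_apply, Pi.smul_apply, smul_eq_mul,
      Matrix.cons_val, deriv_fun_add, deriv_fun_sub, deriv_fun_mul, deriv.fun_neg', deriv_const',
      deriv_div_const, deriv_fun_pow, deriv_id'']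
    ring
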